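/- arXiv:2504.04016 — 2 statements merged into one kernel-verified Lean document; each statement's English description precedes it below -/
import Mathlib

section
/- Sufficient decrease of the proximal gradient iteration: assume W has at least one nonzero entry and define L_x = (max over observed entries of X minus min over observed entries of X)^2, L_w = max_j (Σ_i W_{ij})/n1 + max_i (Σ_j W_{ij})/n2, and L_f = L_x L_w / 2. Let μ > L_f, let M_0 satisfy ‖M_0‖_∞ ≤ α, and define the iterates M_{k+1} = S_{λ/μ,α}(M_k − ∇L(M_k)/μ) and objective values F_k = L(M_k) + λ‖M_k‖_*. Then for every k ≥ 0, F_k − F_{k+1} ≥ ((μ − L_f)/2) ‖M_k − M_{k+1}‖_F². -/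
open scoped BigOperators Classical
open MeasureTheory ProbabilityTheory Matrix

noncomputable section

namespace NMC

/-- Real `n1 × n2` matrices. -/
abbrev Mat (n1 n2 : ℕ) := Matrix (Fin n1) (Fin n2) ℝ

variable {n1 n2 : ℕ}

/-- The pairwise pseudo-log-likelihood loss
`l_{i1j1,i2j2}(m1,m2) = log(1 + exp(−(x1 − x2)(m1 − m2)))`. -/
def pl (x1 x2 m1 m2 : ℝ) : ℝ := Real.log (1 + Real.exp (-((x1 - x2) * (m1 - m2))))

/-- The row- and column-wise matrix U-statistic loss `L(M)`. -/
def lossL (X W M : Mat n1 n2) : ℝ :=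
  (1 / (n2 : ℝ)) * ∑ i : Fin n1, ∑ j1 : Fin n2, ∑ j2 : Fin n2,
      W i j1 * W i j2 * pl (X i j1) (X i j2) (M i j1) (M i j2) +
  (1 / (n1 : ℝ)) * ∑ j : Fin n2, ∑ i1 : Fin n1, ∑ i2 : Fin n1,
      W i1 j * W i2 j * pl (X i1 j) (X i2 j) (M i1 j) (M i2 j)

/-- Update a single entry of a matrix. -/
def updEntry (M : Mat n1 n2) (i : Fin n1) (j : Fin n2) (t : ℝ) : Mat n1 n2 :=
  fun i' j' => if i' = i ∧ j' = j then t else M i' j'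

/-- The gradient matrix `∇L(M)`, whose `(i,j)` entry is the partial derivative
`∂L(M)/∂m_{ij}`. -/
def gradL (X W M : Mat n1 n2) : Mat n1 n2 :=
  fun i j => deriv (fun t => lossL X W (updEntry M i j t)) (M i j)

/-- Frobenius norm. -/
def frobNorm (A : Mat n1 n2) : ℝ := Real.sqrt (∑ i, ∑ j, A i j ^ 2)

/-- Entrywise sup norm `‖A‖_∞ = max_{i,j} |a_{ij}|`. -/
def infNorm (A : Mat n1 n2) : ℝ := sSup (Set.range fun p : Fin n1 × Fin n2 => |A p.1 p.2|)

/-- The (unsorted) singular values of `A`: square roots of eigenvalues of `Aᴴ A`. -/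
def svalsUnsorted (A : Mat n1 n2) : Fin n2 → ℝ :=
  fun k => Real.sqrt ((Matrix.isHermitian_conjTranspose_mul_self A).eigenvalues k)

/-- Nuclear norm `‖A‖_*`: sum of the singular values. -/
def nuclNorm (A : Mat n1 n2) : ℝ := ∑ k, svalsUnsorted A k

/-- `sval A k` is the `k`-th largest singular value of `A` (1-indexed), `σ_k(A)`. -/
def sval (A : Mat n1 n2) (k : ℕ) : ℝ :=
  if h : 1 ≤ k ∧ k ≤ n2 then
    svalsUnsorted A (Tuple.sort (svalsUnsorted A) ⟨n2 - k, by omega⟩)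
  else 0

/-- Spectral norm `‖A‖ = σ_1(A)`. -/
def specNorm (A : Mat n1 n2) : ℝ := sval A 1

/-- Tail sum of singular values `Σ_{k=r}^{n1 ∧ n2} σ_k(A)`. -/
def tailSum (A : Mat n1 n2) (r : ℕ) : ℝ := ∑ k ∈ Finset.Icc r (min n1 n2), sval A k

/-- Mean of the entries of a matrix, `M_m(A) = 1ᵀ A 1/(n1 n2)`. -/
def matMean (A : Mat n1 n2) : ℝ := (∑ i, ∑ j, A i j) / ((n1 : ℝ) * (n2 : ℝ))

/-- `M ⊕ c = M + c 1 1ᵀ`. -/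
def oplus (M : Mat n1 n2) (c : ℝ) : Mat n1 n2 := fun i j => M i j + c

/-- The weights `𝒲_{i1j1,i2j2}`. -/
def wgt (al : ℝ) (X W : Mat n1 n2) (i1 : Fin n1) (j1 : Fin n2) (i2 : Fin n1) (j2 : Fin n2) : ℝ :=
  W i1 j1 * W i2 j2 * (X i1 j1 - X i2 j2) ^ 2 /
    (4 + 2 * Real.exp (2 * al * (X i1 j1 - X i2 j2)) +
      2 * Real.exp (2 * al * (X i2 j2 - X i1 j1)))

/-- The sample semi-norm squared `D_s²(M)`. -/
def Ds2 (al : ℝ) (X W M : Mat n1 n2) : ℝ :=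
  (1 / (n2 : ℝ)) * ∑ i : Fin n1, ∑ j1 : Fin n2, ∑ j2 : Fin n2,
      (M i j1 - M i j2) ^ 2 * wgt al X W i j1 i j2 +
  (1 / (n1 : ℝ)) * ∑ j : Fin n2, ∑ i1 : Fin n1, ∑ i2 : Fin n1,
      (M i1 j - M i2 j) ^ 2 * wgt al X W i1 j i2 j

/-- The population semi-norm squared `D²(M)` (all weights equal to 1). -/
def D2 (M : Mat n1 n2) : ℝ :=
  (1 / (n2 : ℝ)) * ∑ i : Fin n1, ∑ j1 : Fin n2, ∑ j2 : Fin n2, (M i j1 - M i j2) ^ 2 +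
  (1 / (n1 : ℝ)) * ∑ j : Fin n2, ∑ i1 : Fin n1, ∑ i2 : Fin n1, (M i1 j - M i2 j) ^ 2

/-- `L_x`: squared range of the observed entries of `X`. -/
def Lx (X W : Mat n1 n2) : ℝ :=
  (sSup {x : ℝ | ∃ p : Fin n1 × Fin n2, W p.1 p.2 = 1 ∧ x = X p.1 p.2} -
    sInf {x : ℝ | ∃ p : Fin n1 × Fin n2, W p.1 p.2 = 1 ∧ x = X p.1 p.2}) ^ 2

/-- `L_w = max_j (Σ_i W_{ij})/n1 + max_i (Σ_j W_{ij})/n2`. -/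
def Lw (W : Mat n1 n2) : ℝ :=
  sSup (Set.range fun j : Fin n2 => ∑ i, W i j) / (n1 : ℝ) +
  sSup (Set.range fun i : Fin n1 => ∑ j, W i j) / (n2 : ℝ)

/-- `L_f = L_x L_w / 2`, the Lipschitz constant of `∇L`. -/
def Lf (X W : Mat n1 n2) : ℝ := Lx X W * Lw W / 2

/-- The objective of the proximal problem defining `S_{lam,al}(A)`. -/
def proxObj (lam : ℝ) (A Y : Mat n1 n2) : ℝ := 1 / 2 * frobNorm (Y - A) ^ 2 + lam * nuclNorm Y

/-- `IsProx lam al A Y` states that `Y = S_{lam,al}(A)`, i.e. `Y` minimizes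
`(1/2)‖Y − A‖_F² + lam ‖Y‖_*` over `{Y : ‖Y‖_∞ ≤ al}`. -/
def IsProx (lam al : ℝ) (A Y : Mat n1 n2) : Prop :=
  infNorm Y ≤ al ∧ ∀ Z : Mat n1 n2, infNorm Z ≤ al → proxObj lam A Y ≤ proxObj lam A Z

/-- The penalized objective `F(M) = L(M) + lam ‖M‖_*`. -/
def objF (X W : Mat n1 n2) (lam : ℝ) (M : Mat n1 n2) : ℝ := lossL X W M + lam * nuclNorm M

/-- `Mh` is a minimizer of `L(M) + lam ‖M‖_*` over `{M : ‖M‖_∞ ≤ al}`. -/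
def IsMin (X W : Mat n1 n2) (lam al : ℝ) (Mh : Mat n1 n2) : Prop :=
  infNorm Mh ≤ al ∧ ∀ M : Mat n1 n2, infNorm M ≤ al → objF X W lam Mh ≤ objF X W lam M

/-- `c` minimizes `c' ↦ ‖M ⊕ c'‖_*`; then `T(M) = M ⊕ c`. -/
def IsMinShift (M : Mat n1 n2) (c : ℝ) : Prop :=
  ∀ c' : ℝ, nuclNorm (oplus M c) ≤ nuclNorm (oplus M c')

/-- `U` and `V` have as columns top-`r` left and right singular vectors of `A`. -/
def IsTopSVD (r : ℕ) (A : Mat n1 n2) (U : Matrix (Fin n1) (Fin r) ℝ)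
    (V : Matrix (Fin n2) (Fin r) ℝ) : Prop :=
  Uᵀ * U = 1 ∧ Vᵀ * V = 1 ∧
  A * V = U * Matrix.diagonal (fun k : Fin r => sval A (k.1 + 1)) ∧
  Aᵀ * U = V * Matrix.diagonal (fun k : Fin r => sval A (k.1 + 1))

/-- A choice of top-`r` left and right singular vector matrices of `A`. -/
def UVchoice (r : ℕ) (A : Mat n1 n2) :
    Matrix (Fin n1) (Fin r) ℝ × Matrix (Fin n2) (Fin r) ℝ :=
  if h : ∃ p : Matrix (Fin n1) (Fin r) ℝ × Matrix (Fin n2) (Fin r) ℝ,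
      IsTopSVD r A p.1 p.2 then h.choose else (0, 0)

/-- `Θ2 = (I − UUᵀ)(Θ ⊖ M_m(Θ))(I − VVᵀ)`, with `U,V` top-`r` singular vectors of
`M* ⊕ M_m(Θ)`. -/
def theta2 (Mstar : Mat n1 n2) (r : ℕ) (Θ : Mat n1 n2) : Mat n1 n2 :=
  (1 - (UVchoice r (oplus Mstar (matMean Θ))).1 * (UVchoice r (oplus Mstar (matMean Θ))).1ᵀ) *
    oplus Θ (-matMean Θ) *
  (1 - (UVchoice r (oplus Mstar (matMean Θ))).2 * (UVchoice r (oplus Mstar (matMean Θ))).2ᵀ)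

/-- `Θ1 = Θ ⊖ M_m(Θ) − Θ2`. -/
def theta1 (Mstar : Mat n1 n2) (r : ℕ) (Θ : Mat n1 n2) : Mat n1 n2 :=
  oplus Θ (-matMean Θ) - theta2 Mstar r Θ

/-- The cone `C_r = {Θ : ‖Θ2‖_* ≤ 4 Σ_{k=r}^{n1∧n2} σ_k(M*) + 3‖Θ1‖_*}`. -/
def coneC (Mstar : Mat n1 n2) (r : ℕ) : Set (Mat n1 n2) :=
  {Θ | nuclNorm (theta2 Mstar r Θ) ≤ 4 * tailSum Mstar r + 3 * nuclNorm (theta1 Mstar r Θ)}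

/-- Euclidean norm of a vector. -/
def euclNorm {n : ℕ} (v : Fin n → ℝ) : ℝ := Real.sqrt (∑ i, v i ^ 2)

/-- The quantity `𝔅(M*)` of Theorem 4, computed from `T(M*) = M* ⊕ cstar`. -/
def Bconst (Mstar : Mat n1 n2) (cstar : ℝ) : ℝ :=
  euclNorm ((1 - (UVchoice (oplus Mstar cstar).rank (oplus Mstar cstar)).1 *
        (UVchoice (oplus Mstar cstar).rank (oplus Mstar cstar)).1ᵀ).mulVec fun _ => (1 : ℝ)) *
    euclNorm ((1 - (UVchoice (oplus Mstar cstar).rank (oplus Mstar cstar)).2 *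
        (UVchoice (oplus Mstar cstar).rank (oplus Mstar cstar)).2ᵀ).mulVec fun _ => (1 : ℝ)) /
      Real.sqrt ((n1 : ℝ) * (n2 : ℝ)) -
  Real.sqrt ((n1 : ℝ) * (n2 : ℝ)) *
    |matMean ((UVchoice (oplus Mstar cstar).rank (oplus Mstar cstar)).1 *
      (UVchoice (oplus Mstar cstar).rank (oplus Mstar cstar)).2ᵀ)|

/-- The log-normalization function `b(m) = log ∫ exp(x m + f(x)) dν(x)`. -/
def bFun (ν : Measure ℝ) (f : ℝ → ℝ) (m : ℝ) : ℝ :=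
  Real.log ((∫⁻ x, ENNReal.ofReal (Real.exp (x * m + f x)) ∂ν).toReal)

/-- The random variables `Z̃_{i1j1,i2j2}` of the conditional sub-Gaussian condition. -/
def Ztil {Ω : Type} (Mstar : Mat n1 n2) (X : Ω → Mat n1 n2)
    (i1 : Fin n1) (j1 : Fin n2) (i2 : Fin n1) (j2 : Fin n2) (ω : Ω) : ℝ :=
  (X ω i1 j1 - X ω i2 j2) /
    (2 + Real.exp ((X ω i1 j1 - X ω i2 j2) * (Mstar i1 j1 - Mstar i2 j2)) +
      Real.exp (-((X ω i1 j1 - X ω i2 j2) * (Mstar i1 j1 - Mstar i2 j2))))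

/-- `π_U = max_{i,j} P(W_{ij} = 1)`. -/
def piU {Ω : Type} [MeasurableSpace Ω] (P : Measure Ω) (W : Ω → Mat n1 n2) : ℝ :=
  sSup (Set.range fun p : Fin n1 × Fin n2 => (P {ω | W ω p.1 p.2 = 1}).toReal)

/-- `π_L = min_{i,j} P(W_{ij} = 1)`. -/
def piL {Ω : Type} [MeasurableSpace Ω] (P : Measure Ω) (W : Ω → Mat n1 n2) : ℝ :=
  sInf (Set.range fun p : Fin n1 × Fin n2 => (P {ω | W ω p.1 p.2 = 1}).toReal)

/-- Rectangular diagonal matrix with diagonal entries `d 0, d 1, …`. -/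
def rectDiag (n1 n2 : ℕ) (d : ℕ → ℝ) : Mat n1 n2 :=
  fun i j => if (i : ℕ) = (j : ℕ) then d (i : ℕ) else 0

/-! Each pair term of `L` is the logistic loss `s ↦ log (1 + exp (-s))` at `s = c (m₁ - m₂)`;
its derivative `σ - 1` is `1/4`-Lipschitz, so the term lies below its tangent plus
`c² (d₁ - d₂)² / 8`. Summing with the weighted identity
`Σ w_a w_b (d_a - d_b)² = 2 (Σ w)(Σ w d²) - 2 (Σ w d)²` and bounding `c² ≤ L_x` on observed pairs
gives the descent lemma `L(M + D) ≤ L(M) + ⟨∇L(M), D⟩ + (L_f / 2) ‖D‖_F²`. Comparing the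
proximal point `M_{k+1}` with the feasible point `M_k` in the proximal objective gives
`(μ / 2) ‖Δ‖_F² + ⟨∇L(M_k), Δ⟩ + λ (‖M_{k+1}‖_* - ‖M_k‖_*) ≤ 0` for `Δ = M_{k+1} - M_k`, and
adding the two inequalities is the claim. -/

open scoped NNReal

theorem le_add_mul_sub_add_sq_of_lipschitzWith {f f' : ℝ → ℝ} {K : ℝ≥0}
    (hf : ∀ x, HasDerivAt f (f' x) x) (hf' : LipschitzWith K f') (a b : ℝ) :
    f b ≤ f a + f' a * (b - a) + K / 2 * (b - a) ^ 2 := by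
  set q : ℝ → ℝ := fun s => f a + f' a * (s - a) + K / 2 * (s - a) ^ 2 - f s
  have hq : ∀ s, HasDerivAt q (f' a + K * (s - a) - f' s) s := fun s => by
    have hlin := (hasDerivAt_id' s).sub_const a
    refine ((((hlin.const_mul (f' a)).const_add (f a)).fun_add
      ((hlin.fun_pow 2).const_mul ((K : ℝ) / 2))).fun_sub (hf s)).congr_deriv ?_
    ring
  -- `q'` is monotone because `f'` is `K`-Lipschitz, so the convex `q` is minimal at its critical
  -- point `a`.
  have hmono : Monotone (deriv q) := fun s t hst => by
    have hlip : f' t - f' s ≤ K * (t - s) := by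
      have := hf'.dist_le_mul t s
      rw [Real.dist_eq, Real.dist_eq, abs_of_nonneg (sub_nonneg.2 hst)] at this
      exact (le_abs_self _).trans this
    rw [(hq s).deriv, (hq t).deriv]
    linarith
  have hconv := hmono.convexOn_univ_of_deriv fun s => (hq s).differentiableAt
  have hmin := hconv.isMinOn_of_rightDeriv_eq_zero (x := a) (by simp)
    (by rw [(hq a).hasDerivWithinAt.derivWithin (uniqueDiffWithinAt_Ioi a)]; ring)
  have : q a ≤ q b := hmin (Set.mem_univ b)
  simp only [q] at this
  linarith

theorem sum_sum_mul_mul_sub_sq {ι : Type*} [Fintype ι] (w d : ι → ℝ) :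
    ∑ a, ∑ b, w a * w b * (d a - d b) ^ 2 =
      2 * ((∑ a, w a) * ∑ a, w a * d a ^ 2 - (∑ a, w a * d a) ^ 2) := by
  have h : ∀ a b, w a * w b * (d a - d b) ^ 2 =
      w a * d a ^ 2 * w b + w a * (w b * d b ^ 2) - 2 * ((w a * d a) * (w b * d b)) := by
    intro a b; ring
  simp only [h, Finset.sum_sub_distrib, Finset.sum_add_distrib, ← Finset.mul_sum,
    ← Finset.sum_mul]
  ring

theorem sum_sum_mul_mul_sub_sq_le {ι : Type*} [Fintype ι] {w : ι → ℝ}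
    (hw0 : ∀ a, 0 ≤ w a) (hw1 : ∀ a, w a ≤ 1) (d : ι → ℝ) :
    ∑ a, ∑ b, w a * w b * (d a - d b) ^ 2 ≤ 2 * (∑ a, w a) * ∑ a, d a ^ 2 := by
  have hwd : ∑ a, w a * d a ^ 2 ≤ ∑ a, d a ^ 2 :=
    Finset.sum_le_sum fun a _ => mul_le_of_le_one_left (sq_nonneg _) (hw1 a)
  have hw : 0 ≤ ∑ a, w a := Finset.sum_nonneg fun a _ => hw0 a
  rw [sum_sum_mul_mul_sub_sq]
  nlinarith [sq_nonneg (∑ a, w a * d a), mul_le_mul_of_nonneg_left hwd hw]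

def logisticLoss (s : ℝ) : ℝ := Real.log (1 + Real.exp (-s))

theorem hasDerivAt_logisticLoss (s : ℝ) :
    HasDerivAt logisticLoss (Real.sigmoid s - 1) s := by
  have h : HasDerivAt logisticLoss _ s :=
    (((hasDerivAt_neg s).exp).const_add 1).log (by positivity)
  convert h using 1
  rw [Real.sigmoid_def]
  field_simp
  ring

theorem lipschitzWith_sigmoid : LipschitzWith (1 / 4) Real.sigmoid := by
  refine lipschitzWith_of_nnnorm_deriv_le differentiable_sigmoid fun x => ?_
  rw [← NNReal.coe_le_coe, coe_nnnorm, Real.deriv_sigmoid, Real.norm_eq_abs,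
    abs_of_nonneg (mul_nonneg (Real.sigmoid_nonneg x) (sub_nonneg.2 (Real.sigmoid_le_one x)))]
  push_cast
  nlinarith [sq_nonneg (Real.sigmoid x - 1 / 2)]

theorem logisticLoss_le (u v : ℝ) :
    logisticLoss v ≤ logisticLoss u + (Real.sigmoid u - 1) * (v - u) + (v - u) ^ 2 / 8 := by
  have h := le_add_mul_sub_add_sq_of_lipschitzWith hasDerivAt_logisticLoss
    (f' := fun s => Real.sigmoid s - 1) (K := 1 / 4)
    (by simpa using lipschitzWith_sigmoid.sub (LipschitzWith.const 1)) u v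
  norm_num at h
  linarith

theorem pl_eq_logisticLoss (x1 x2 m1 m2 : ℝ) :
    pl x1 x2 m1 m2 = logisticLoss ((x1 - x2) * (m1 - m2)) := rfl

/-- `∂ pl x1 x2 m1 m2 / ∂ m1`. -/
def plDeriv (x1 x2 m1 m2 : ℝ) : ℝ := (Real.sigmoid ((x1 - x2) * (m1 - m2)) - 1) * (x1 - x2)

theorem hasDerivAt_pl_line (x1 x2 a1 a2 d1 d2 : ℝ) :
    HasDerivAt (fun t => pl x1 x2 (a1 + t * d1) (a2 + t * d2))
      (plDeriv x1 x2 a1 a2 * (d1 - d2)) 0 := by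
  have hin : HasDerivAt (fun t => (x1 - x2) * ((a1 + t * d1) - (a2 + t * d2)))
      ((x1 - x2) * (1 * d1 - 1 * d2)) 0 :=
    ((((hasDerivAt_id' 0).mul_const d1).const_add a1).sub
      (((hasDerivAt_id' 0).mul_const d2).const_add a2)).const_mul (x1 - x2)
  have h := (hasDerivAt_logisticLoss ((x1 - x2) * (a1 - a2))).comp_of_eq 0 hin (by simp)
  exact h.congr_deriv (by rw [plDeriv]; ring)

theorem pl_add_le (x1 x2 a1 a2 d1 d2 : ℝ) :
    pl x1 x2 (a1 + d1) (a2 + d2) ≤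
      pl x1 x2 a1 a2 + plDeriv x1 x2 a1 a2 * (d1 - d2) + (x1 - x2) ^ 2 * (d1 - d2) ^ 2 / 8 := by
  have h := logisticLoss_le ((x1 - x2) * (a1 - a2)) ((x1 - x2) * (a1 + d1 - (a2 + d2)))
  rw [pl_eq_logisticLoss, pl_eq_logisticLoss, plDeriv]
  exact h.trans_eq (by ring)

section RowLoss

variable (X W : Mat n1 n2)

def rowLoss (M : Mat n1 n2) : ℝ :=
  ∑ i, ∑ j1, ∑ j2, W i j1 * W i j2 * pl (X i j1) (X i j2) (M i j1) (M i j2)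

def rowDirDeriv (Z D : Mat n1 n2) : ℝ :=
  ∑ i, ∑ j1, ∑ j2,
    W i j1 * W i j2 * plDeriv (X i j1) (X i j2) (Z i j1) (Z i j2) * (D i j1 - D i j2)

theorem lossL_eq_rowLoss (M : Mat n1 n2) :
    lossL X W M = 1 / (n2 : ℝ) * rowLoss X W M + 1 / (n1 : ℝ) * rowLoss Xᵀ Wᵀ Mᵀ := rfl

theorem hasDerivAt_rowLoss_line (Z D : Mat n1 n2) :
    HasDerivAt (fun t : ℝ => rowLoss X W (Z + t • D)) (rowDirDeriv X W Z D) 0 := by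
  simp only [rowLoss, rowDirDeriv, Matrix.add_apply, Matrix.smul_apply, smul_eq_mul]
  exact HasDerivAt.fun_sum fun i _ => HasDerivAt.fun_sum fun j1 _ => HasDerivAt.fun_sum
    fun j2 _ => ((hasDerivAt_pl_line _ _ _ _ _ _).const_mul _).congr_deriv (mul_assoc _ _ _).symm

theorem rowLoss_add_le (hW : ∀ i j, W i j = 0 ∨ W i j = 1) {B R : ℝ} (hB : 0 ≤ B)
    (hX : ∀ i j1 j2, W i j1 = 1 → W i j2 = 1 → (X i j1 - X i j2) ^ 2 ≤ B)
    (hR : ∀ i, ∑ j, W i j ≤ R) (Z D : Mat n1 n2) :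
    rowLoss X W (Z + D) ≤ rowLoss X W Z + rowDirDeriv X W Z D + B * R / 4 * ∑ i, ∑ j, D i j ^ 2 := by
  have hterm : ∀ i j1 j2, W i j1 * W i j2 * pl (X i j1) (X i j2) (Z i j1 + D i j1) (Z i j2 + D i j2)
      ≤ W i j1 * W i j2 * pl (X i j1) (X i j2) (Z i j1) (Z i j2)
        + W i j1 * W i j2 * plDeriv (X i j1) (X i j2) (Z i j1) (Z i j2) * (D i j1 - D i j2)
        + B / 8 * (W i j1 * W i j2 * (D i j1 - D i j2) ^ 2) := by
    intro i j1 j2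
    rcases hW i j1 with h1 | h1 <;> rcases hW i j2 with h2 | h2 <;> simp only [h1, h2] <;>
      try simp
    have := pl_add_le (X i j1) (X i j2) (Z i j1) (Z i j2) (D i j1) (D i j2)
    nlinarith [mul_le_mul_of_nonneg_right (hX i j1 j2 h1 h2) (sq_nonneg (D i j1 - D i j2))]
  have hrow : ∀ i, ∑ j1, ∑ j2, W i j1 * W i j2 * (D i j1 - D i j2) ^ 2 ≤ 2 * R * ∑ j, D i j ^ 2 :=
    fun i => (sum_sum_mul_mul_sub_sq_le (fun j => by rcases hW i j with h | h <;> simp [h])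
      (fun j => by rcases hW i j with h | h <;> simp [h]) _).trans
      (by gcongr; exact hR i)
  calc rowLoss X W (Z + D)
      ≤ rowLoss X W Z + rowDirDeriv X W Z D
          + B / 8 * ∑ i, ∑ j1, ∑ j2, W i j1 * W i j2 * (D i j1 - D i j2) ^ 2 := by
        simp only [rowLoss, rowDirDeriv, Finset.mul_sum, ← Finset.sum_add_distrib,
          Matrix.add_apply]
        gcongr with i _ j1 _ j2 _
        exact hterm i j1 j2
    _ ≤ rowLoss X W Z + rowDirDeriv X W Z D + B / 8 * ∑ i, 2 * R * ∑ j, D i j ^ 2 := by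
        gcongr with i
        exact hrow i
    _ = rowLoss X W Z + rowDirDeriv X W Z D + B * R / 4 * ∑ i, ∑ j, D i j ^ 2 := by
        rw [← Finset.mul_sum]; ring

end RowLoss

section Gradient

-- Any norm would do: it only serves to speak of `fderiv`, and all norms on matrices are equivalent.
attribute [local instance] Matrix.normedAddCommGroup Matrix.normedSpace

theorem updEntry_eq_add_smul_single (M : Mat n1 n2) (i : Fin n1) (j : Fin n2) (t : ℝ) :
    updEntry M i j t = M + (t - M i j) • Matrix.single i j 1 := by
  ext i' j'
  by_cases h : i' = i ∧ j' = j
  · obtain ⟨rfl, rfl⟩ := h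
    simp [updEntry]
  · have h' : ¬ (i = i' ∧ j = j') := fun h' => h ⟨h'.1.symm, h'.2.symm⟩
    simp [updEntry, h, h']

theorem sum_deriv_updEntry_mul_eq_fderiv {f : Mat n1 n2 → ℝ} {Z : Mat n1 n2}
    (hf : DifferentiableAt ℝ f Z) (D : Mat n1 n2) :
    ∑ i, ∑ j, deriv (fun t => f (updEntry Z i j t)) (Z i j) * D i j = fderiv ℝ f Z D := by
  have hpartial : ∀ i j, deriv (fun t => f (updEntry Z i j t)) (Z i j) =
      fderiv ℝ f Z (Matrix.single i j 1) := by
    intro i j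
    have hline := (((hasDerivAt_id' (Z i j)).sub_const (Z i j)).smul_const
      (Matrix.single i j (1 : ℝ))).const_add Z
    have h := (hf.hasFDerivAt.comp_hasDerivAt_of_eq (Z i j) hline (by simp)).deriv
    simp only [Function.comp_def, one_smul] at h
    simp only [updEntry_eq_add_smul_single]
    exact h
  conv_rhs => rw [Matrix.matrix_eq_sum_single D]
  simp only [hpartial, map_sum]
  refine Finset.sum_congr rfl fun i _ => Finset.sum_congr rfl fun j _ => ?_
  have hs : Matrix.single i j (D i j) = D i j • Matrix.single i j (1 : ℝ) := by
    rw [Matrix.smul_single, smul_eq_mul, mul_one]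
  rw [hs, map_smul, smul_eq_mul, mul_comm]

theorem differentiable_logisticLoss : Differentiable ℝ logisticLoss :=
  fun s => (hasDerivAt_logisticLoss s).differentiableAt

theorem differentiable_lossL (X W : Mat n1 n2) : Differentiable ℝ (lossL X W) := by
  have := differentiable_logisticLoss
  unfold lossL
  simp only [pl_eq_logisticLoss]
  fun_prop

variable (X W : Mat n1 n2)

def lossDirDeriv (Z D : Mat n1 n2) : ℝ :=
  1 / (n2 : ℝ) * rowDirDeriv X W Z D + 1 / (n1 : ℝ) * rowDirDeriv Xᵀ Wᵀ Zᵀ Dᵀ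

theorem hasDerivAt_lossL_line (Z D : Mat n1 n2) :
    HasDerivAt (fun t : ℝ => lossL X W (Z + t • D)) (lossDirDeriv X W Z D) 0 := by
  simp only [lossL_eq_rowLoss, Matrix.transpose_add, Matrix.transpose_smul]
  exact ((hasDerivAt_rowLoss_line X W Z D).const_mul _).add
    ((hasDerivAt_rowLoss_line Xᵀ Wᵀ Zᵀ Dᵀ).const_mul _)

theorem sum_gradL_mul (Z D : Mat n1 n2) :
    ∑ i, ∑ j, gradL X W Z i j * D i j = lossDirDeriv X W Z D := by
  have hf := differentiable_lossL X W Z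
  have hline := (((hasDerivAt_id' (0 : ℝ)).smul_const D).const_add Z)
  have h := hf.hasFDerivAt.comp_hasDerivAt_of_eq 0 hline (by simp)
  simp only [Function.comp_def, one_smul] at h
  exact (sum_deriv_updEntry_mul_eq_fderiv hf D).trans (h.unique (hasDerivAt_lossL_line X W Z D))

end Gradient

theorem sq_sub_le_Lx (X W : Mat n1 n2) {i i' : Fin n1} {j j' : Fin n2} (h : W i j = 1)
    (h' : W i' j' = 1) : (X i j - X i' j') ^ 2 ≤ Lx X W := by
  set S := {x : ℝ | ∃ p : Fin n1 × Fin n2, W p.1 p.2 = 1 ∧ x = X p.1 p.2}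
  have hS : S.Finite := (Set.finite_range fun p : Fin n1 × Fin n2 => X p.1 p.2).subset
    fun x ⟨p, _, hx⟩ => ⟨p, hx.symm⟩
  have hm : X i j ∈ S := ⟨(i, j), h, rfl⟩
  have hm' : X i' j' ∈ S := ⟨(i', j'), h', rfl⟩
  have := le_csSup hS.bddAbove hm
  have := le_csSup hS.bddAbove hm'
  have := csInf_le hS.bddBelow hm
  have := csInf_le hS.bddBelow hm'
  exact sq_le_sq' (by linarith) (by linarith)

theorem Lf_nonneg (X : Mat n1 n2) {W : Mat n1 n2} (hW : ∀ i j, 0 ≤ W i j) : 0 ≤ Lf X W := by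
  have hLw : 0 ≤ Lw W := add_nonneg
    (div_nonneg (Real.iSup_nonneg fun j => Finset.sum_nonneg fun i _ => hW i j) n1.cast_nonneg)
    (div_nonneg (Real.iSup_nonneg fun i => Finset.sum_nonneg fun j _ => hW i j) n2.cast_nonneg)
  exact div_nonneg (mul_nonneg (sq_nonneg _) hLw) zero_le_two

theorem lossL_add_le (X : Mat n1 n2) {W : Mat n1 n2} (hW : ∀ i j, W i j = 0 ∨ W i j = 1)
    (Z D : Mat n1 n2) :
    lossL X W (Z + D) ≤ lossL X W Z + lossDirDeriv X W Z D + Lf X W / 2 * ∑ i, ∑ j, D i j ^ 2 := by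
  have hLx : 0 ≤ Lx X W := sq_nonneg _
  have hrows := rowLoss_add_le X W hW hLx (fun i j1 j2 h1 h2 => sq_sub_le_Lx X W h1 h2)
    (le_ciSup (Set.finite_range _).bddAbove) Z D
  have hcols := rowLoss_add_le Xᵀ Wᵀ (fun j i => hW i j) hLx
    (fun j i1 i2 h1 h2 => sq_sub_le_Lx X W h1 h2) (le_ciSup (Set.finite_range _).bddAbove)
    Zᵀ Dᵀ
  have hsumT : ∑ j, ∑ i, Dᵀ j i ^ 2 = ∑ i, ∑ j, D i j ^ 2 := Finset.sum_comm
  rw [hsumT] at hcols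
  simp only [Matrix.transpose_apply] at hcols
  have hLf : Lf X W / 2 = 1 / (n2 : ℝ) * (Lx X W * (⨆ i, ∑ j, W i j) / 4)
      + 1 / (n1 : ℝ) * (Lx X W * (⨆ j, ∑ i, W i j) / 4) := by
    rw [Lf, Lw, iSup, iSup]; ring
  rw [lossL_eq_rowLoss, lossL_eq_rowLoss, lossDirDeriv, hLf, Matrix.transpose_add]
  have h2 := mul_le_mul_of_nonneg_left hrows (by positivity : (0 : ℝ) ≤ 1 / (n2 : ℝ))
  have h1 := mul_le_mul_of_nonneg_left hcols (by positivity : (0 : ℝ) ≤ 1 / (n1 : ℝ))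
  linarith

theorem frobNorm_sq (A : Mat n1 n2) : frobNorm A ^ 2 = ∑ i, ∑ j, A i j ^ 2 :=
  Real.sq_sqrt (Finset.sum_nonneg fun _ _ => Finset.sum_nonneg fun _ _ => sq_nonneg _)

theorem frobNorm_sub_comm (A B : Mat n1 n2) : frobNorm (A - B) = frobNorm (B - A) := by
  rw [← neg_sub B A]
  simp only [frobNorm, Matrix.neg_apply, neg_sq]

theorem lossL_le_add_sum_gradL_mul (X : Mat n1 n2) {W : Mat n1 n2}
    (hW : ∀ i j, W i j = 0 ∨ W i j = 1) (Z Y : Mat n1 n2) :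
    lossL X W Y ≤ lossL X W Z + ∑ i, ∑ j, gradL X W Z i j * (Y - Z) i j
      + Lf X W / 2 * frobNorm (Y - Z) ^ 2 := by
  rw [sum_gradL_mul, frobNorm_sq]
  simpa using lossL_add_le X hW Z (Y - Z)

theorem IsProx.gradient_step_le {lam al mu : ℝ} {Z Y G : Mat n1 n2}
    (hY : IsProx (lam / mu) al (Z - mu⁻¹ • G) Y) (hmu : 0 < mu) (hZ : infNorm Z ≤ al) :
    mu / 2 * frobNorm (Y - Z) ^ 2 + ∑ i, ∑ j, G i j * (Y - Z) i j
      + lam * (nuclNorm Y - nuclNorm Z) ≤ 0 := by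
  have h := hY.2 Z hZ
  have hexp : frobNorm (Y - (Z - mu⁻¹ • G)) ^ 2 = frobNorm (Y - Z) ^ 2
      + 2 * mu⁻¹ * ∑ i, ∑ j, G i j * (Y - Z) i j + frobNorm (Z - (Z - mu⁻¹ • G)) ^ 2 := by
    simp only [frobNorm_sq, Finset.mul_sum, ← Finset.sum_add_distrib]
    refine Finset.sum_congr rfl fun i _ => Finset.sum_congr rfl fun j _ => ?_
    simp only [Matrix.sub_apply, Matrix.smul_apply, smul_eq_mul]
    ring
  rw [proxObj, proxObj, hexp] at h
  have key : mu * (1 / 2 * frobNorm (Y - Z) ^ 2 + mu⁻¹ * ∑ i, ∑ j, G i j * (Y - Z) i j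
      + lam / mu * (nuclNorm Y - nuclNorm Z)) ≤ 0 :=
    mul_nonpos_of_nonneg_of_nonpos hmu.le (by linarith)
  have e : mu * (1 / 2 * frobNorm (Y - Z) ^ 2 + mu⁻¹ * ∑ i, ∑ j, G i j * (Y - Z) i j
      + lam / mu * (nuclNorm Y - nuclNorm Z)) = mu / 2 * frobNorm (Y - Z) ^ 2
      + ∑ i, ∑ j, G i j * (Y - Z) i j + lam * (nuclNorm Y - nuclNorm Z) := by
    field_simp
  linarith

theorem statement0_general (n1 n2 : ℕ)
    (al lam : ℝ)
    (X W : Mat n1 n2) (hW01 : ∀ i j, W i j = 0 ∨ W i j = 1)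
    (mu : ℝ) (hmu : Lf X W < mu)
    (M : ℕ → Mat n1 n2) (hM0 : infNorm (M 0) ≤ al)
    (hiter : ∀ k : ℕ, IsProx (lam / mu) al (M k - mu⁻¹ • gradL X W (M k)) (M (k + 1)))
    (F : ℕ → ℝ) (hF : ∀ k, F k = objF X W lam (M k)) :
    ∀ k : ℕ, (mu - Lf X W) / 2 * frobNorm (M k - M (k + 1)) ^ 2 ≤ F k - F (k + 1) := by
  have hmu0 : 0 < mu :=
    (Lf_nonneg X fun i j => by rcases hW01 i j with h | h <;> simp [h]).trans_lt hmu
  have hfeas : ∀ k, infNorm (M k) ≤ al := fun k => by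
    cases k with
    | zero => exact hM0
    | succ k => exact (hiter k).1
  intro k
  have hdescent := lossL_le_add_sum_gradL_mul X hW01 (M k) (M (k + 1))
  have hprox := (hiter k).gradient_step_le hmu0 (hfeas k)
  rw [hF, hF, objF, objF, frobNorm_sub_comm]
  linarith

theorem statement0 (n1 n2 : ℕ) (hn1 : 0 < n1) (hn2 : 0 < n2)
    (al lam : ℝ) (hal : 0 < al) (hlam : 0 < lam)
    (X W : Mat n1 n2) (hW01 : ∀ i j, W i j = 0 ∨ W i j = 1)
    (hWnz : ∃ i j, W i j = 1)
    (mu : ℝ) (hmu : Lf X W < mu)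
    (M : ℕ → Mat n1 n2) (hM0 : infNorm (M 0) ≤ al)
    (hiter : ∀ k : ℕ, IsProx (lam / mu) al (M k - mu⁻¹ • gradL X W (M k)) (M (k + 1)))
    (F : ℕ → ℝ) (hF : ∀ k, F k = objF X W lam (M k)) :
    ∀ k : ℕ, (mu - Lf X W) / 2 * frobNorm (M k - M (k + 1)) ^ 2 ≤ F k - F (k + 1) :=
  statement0_general n1 n2 al lam X W hW01 mu hmu M hM0 hiter F hF

end NMC
end
end

section
/- Existence and uniqueness of the nuclear-norm-minimizing shift: for every matrix M ∈ ℝ^{n1×n2}, the function c ↦ ‖M ⊕ c‖_* from ℝ to ℝ is convex and attains its minimum at a unique point ĉ ∈ ℝ; consequently the transformation T(M) = M ⊕ ĉ is well defined. -/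
/-!
The nuclear norm is the maximum of the pairing `tr (Gᵀ A)` over contractions `G`
(`1 - Gᵀ G ⪰ 0`): in an orthonormal eigenbasis of `Aᵀ A` the pairing is a sum of inner products
of unit-or-shorter columns against columns of lengths `σ_k`, and the polar factor of `A` attains
`∑ σ_k`. Hence `‖·‖_*` is a seminorm dominating every entry, so `c ↦ ‖M ⊕ c‖_*` is convex and
coercive and has a minimiser. In the equality case each column of `A` is `σ_k` times the
corresponding column of `G`, which forces `Gᵀ A` to be symmetric and `G Gᵀ A = A`.
If `d₁, d₂` are minimisers, a contraction `G` attaining the norm at the midpoint attains it at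
both ends; then `Gᵀ (d₂ - d₁) 1 1ᵀ` is symmetric with constant rows and trace `0`, hence zero, and
`(d₂ - d₁) 1 1ᵀ = G Gᵀ (d₂ - d₁) 1 1ᵀ = 0`.
-/

open scoped BigOperators Classical
open MeasureTheory ProbabilityTheory Matrix

noncomputable section

section DotProduct

variable {ι : Type*} [Fintype ι] {x y : ι → ℝ} {s : ℝ}

lemma dotProduct_le_of_dotProduct_self_le (hs : 0 ≤ s) (hx : x ⬝ᵥ x ≤ 1)
    (hy : y ⬝ᵥ y = s ^ 2) : x ⬝ᵥ y ≤ s := by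
  have hcs : (x ⬝ᵥ y) ^ 2 ≤ (x ⬝ᵥ x) * (y ⬝ᵥ y) := by
    simpa only [dotProduct, sq] using Finset.sum_mul_sq_le_sq_mul_sq Finset.univ x y
  have hyy : 0 ≤ y ⬝ᵥ y := hy ▸ sq_nonneg s
  nlinarith [mul_le_mul_of_nonneg_right hx hyy]

lemma eq_smul_of_dotProduct_eq (hx : x ⬝ᵥ x ≤ 1) (hy : y ⬝ᵥ y = s ^ 2) (h : x ⬝ᵥ y = s) :
    y = s • x ∧ (s ≠ 0 → x ⬝ᵥ x = 1) := by
  have hexp : (y - s • x) ⬝ᵥ (y - s • x) = s ^ 2 * (x ⬝ᵥ x - 1) := by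
    simp only [sub_dotProduct, dotProduct_sub, smul_dotProduct, dotProduct_smul, smul_eq_mul,
      dotProduct_comm y x, hy, h]
    ring
  have hzero : (y - s • x) ⬝ᵥ (y - s • x) = 0 := by
    refine le_antisymm ?_ (by simpa using dotProduct_self_star_nonneg (y - s • x))
    rw [hexp]
    exact mul_nonpos_of_nonneg_of_nonpos (sq_nonneg s) (by linarith)
  refine ⟨sub_eq_zero.mp (dotProduct_self_eq_zero.mp hzero), fun hs => ?_⟩
  rw [hexp] at hzero
  have := (mul_eq_zero.mp hzero).resolve_left (pow_ne_zero 2 hs)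
  linarith

end DotProduct

namespace Matrix

lemma eq_zero_of_isSymm_of_trace_eq_zero {n : Type*} [Fintype n] {X : Matrix n n ℝ}
    (hrow : ∀ i j k, X i j = X i k) (hX : X.IsSymm) (htr : X.trace = 0) : X = 0 := by
  ext i j
  have hdiag k : X k k = X i j := by rw [hrow k k i, hX.apply i k, hrow i k j]
  have : Nonempty n := ⟨i⟩
  have hcard : (Fintype.card n : ℝ) ≠ 0 := Nat.cast_ne_zero.mpr Fintype.card_ne_zero
  have hsum : (Fintype.card n : ℝ) * X i j = 0 := by
    rw [← htr, trace]
    simp [diag, hdiag]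
  exact (mul_eq_zero.mp hsum).resolve_left hcard

section Contraction

variable {m n k : Type*} [Fintype m] [DecidableEq n]

def IsContraction (G : Matrix m n ℝ) : Prop := (1 - Gᵀ * G).PosSemidef

lemma IsContraction.neg {G : Matrix m n ℝ} (hG : G.IsContraction) : (-G).IsContraction := by
  simpa [IsContraction] using hG

lemma isContraction_single [DecidableEq m] (i : m) (j : n) :
    (single i j (1 : ℝ)).IsContraction := by
  unfold IsContraction
  rw [transpose_single, single_mul_single_same, mul_one, ← diagonal_one, ← diagonal_single,
    diagonal_sub]
  refine PosSemidef.diagonal fun l => ?_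
  by_cases hl : l = j <;> simp [hl]

lemma IsContraction.dotProduct_col_le_one {G : Matrix m n ℝ} (hG : G.IsContraction) (l : n) :
    Gᵀ l ⬝ᵥ Gᵀ l ≤ 1 := by
  have h := hG.diag_nonneg (i := l)
  rw [sub_apply, one_apply_eq] at h
  exact sub_nonneg.mp h

variable [Fintype n]

lemma IsContraction.mul_isometry [Fintype k] [DecidableEq k] {G : Matrix m n ℝ}
    (hG : G.IsContraction) {V : Matrix n k ℝ} (hV : Vᵀ * V = 1) : (G * V).IsContraction := by
  have h := hG.conjTranspose_mul_mul_same V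
  rw [conjTranspose_eq_transpose_of_trivial] at h
  unfold IsContraction
  convert h using 1
  rw [Matrix.mul_sub, Matrix.sub_mul, Matrix.mul_one, hV, transpose_mul]
  simp only [Matrix.mul_assoc]

lemma IsContraction.transpose_mul_self_apply_of_dotProduct_col {G : Matrix m n ℝ}
    (hG : G.IsContraction) {l : n} (hl : Gᵀ l ⬝ᵥ Gᵀ l = 1) (i : n) :
    (Gᵀ * G) i l = (1 : Matrix n n ℝ) i l := by
  have hq : star (Pi.single l 1 : n → ℝ) ⬝ᵥ (1 - Gᵀ * G) *ᵥ Pi.single l 1 = 0 := by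
    rw [star_trivial, mulVec_single_one, single_one_dotProduct, col_apply, sub_apply,
      one_apply_eq, mul_apply']
    exact sub_eq_zero.mpr hl.symm
  have h := congrFun ((hG.dotProduct_mulVec_zero_iff _).mp hq) i
  rw [mulVec_single_one, col_apply, sub_apply] at h
  exact (sub_eq_zero.mp h).symm

lemma trace_transpose_mul_mul_of_mul_transpose [Fintype k] (G A : Matrix m n ℝ)
    {V : Matrix n k ℝ} (hV : V * Vᵀ = 1) : ((G * V)ᵀ * (A * V)).trace = (Gᵀ * A).trace := by
  rw [transpose_mul, Matrix.mul_assoc, trace_mul_comm, Matrix.mul_assoc, Matrix.mul_assoc, hV,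
    Matrix.mul_one]

end Contraction

section DiagonalFrame

-- `Y` plays the role of `A V` for an orthonormal eigenbasis `V` of `Aᵀ A`, and `σ` of the
-- singular values of `A`.

variable {m n : Type*} [Fintype m] [DecidableEq n] {σ : n → ℝ} {X Y : Matrix m n ℝ}

lemma dotProduct_col_self_of_transpose_mul_self_eq (hY : Yᵀ * Y = diagonal fun l => σ l ^ 2)
    (l : n) : Yᵀ l ⬝ᵥ Yᵀ l = σ l ^ 2 := by
  have h := congrFun (congrFun hY l) l
  rwa [diagonal_apply_eq] at h

variable [Fintype n]

lemma IsContraction.trace_transpose_mul_le_sum (hX : X.IsContraction) (hσ : 0 ≤ σ)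
    (hY : Yᵀ * Y = diagonal fun l => σ l ^ 2) : (Xᵀ * Y).trace ≤ ∑ l, σ l :=
  Finset.sum_le_sum fun l _ => dotProduct_le_of_dotProduct_self_le (hσ l)
    (hX.dotProduct_col_le_one l) (dotProduct_col_self_of_transpose_mul_self_eq hY l)

lemma exists_isContraction_trace_transpose_mul_eq_sum (hY : Yᵀ * Y = diagonal fun l => σ l ^ 2) :
    ∃ X : Matrix m n ℝ, X.IsContraction ∧ (Xᵀ * Y).trace = ∑ l, σ l := by
  -- `0⁻¹ = 0`: the columns of `Y` with `σ l ≠ 0` are normalised, the others are killed.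
  refine ⟨Y * diagonal fun l => (σ l)⁻¹, ?_, ?_⟩
  · have hXX : (Y * diagonal fun l => (σ l)⁻¹)ᵀ * (Y * diagonal fun l => (σ l)⁻¹) =
        diagonal fun l => (σ l)⁻¹ * (σ l ^ 2 * (σ l)⁻¹) := by
      rw [transpose_mul, diagonal_transpose, Matrix.mul_assoc, ← Matrix.mul_assoc Yᵀ, hY,
        diagonal_mul_diagonal, diagonal_mul_diagonal]
    unfold IsContraction
    rw [hXX, ← diagonal_one, diagonal_sub]
    refine PosSemidef.diagonal fun l => ?_
    rcases eq_or_ne (σ l) 0 with hl | hl <;> simp [hl, sq]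
  · rw [transpose_mul, diagonal_transpose, Matrix.mul_assoc, hY, diagonal_mul_diagonal,
      trace_diagonal]
    refine Finset.sum_congr rfl fun l _ => ?_
    rcases eq_or_ne (σ l) 0 with hl | hl
    · simp [hl]
    · field_simp

lemma IsContraction.isSymm_and_mul_eq_of_trace_transpose_mul_eq_sum (hX : X.IsContraction)
    (hσ : 0 ≤ σ) (hY : Yᵀ * Y = diagonal fun l => σ l ^ 2) (h : (Xᵀ * Y).trace = ∑ l, σ l) :
    (Xᵀ * Y).IsSymm ∧ X * (Xᵀ * Y) = Y := by
  have hcol : ∀ l, Xᵀ l ⬝ᵥ Yᵀ l = σ l := fun l =>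
    (Finset.sum_eq_sum_iff_of_le fun l _ => dotProduct_le_of_dotProduct_self_le (hσ l)
      (hX.dotProduct_col_le_one l) (dotProduct_col_self_of_transpose_mul_self_eq hY l)).mp h l
      (Finset.mem_univ l)
  have heq l := eq_smul_of_dotProduct_eq (hX.dotProduct_col_le_one l)
    (dotProduct_col_self_of_transpose_mul_self_eq hY l) (hcol l)
  have hYX : Y = X * diagonal σ := by
    ext i l
    rw [mul_diagonal, mul_comm]
    exact congrFun (heq l).1 i
  have hXXσ : Xᵀ * X * diagonal σ = diagonal σ := by
    ext i l
    rw [mul_diagonal, diagonal_apply]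
    rcases eq_or_ne (σ l) 0 with hl | hl
    · split_ifs with hil <;> simp [hil, hl]
    · rw [hX.transpose_mul_self_apply_of_dotProduct_col ((heq l).2 hl) i, one_apply]
      split_ifs with hil <;> simp [hil]
  have hXY : Xᵀ * Y = diagonal σ := by rw [hYX, ← Matrix.mul_assoc, hXXσ]
  exact ⟨hXY ▸ isSymm_diagonal σ, by rw [hXY, ← hYX]⟩

end DiagonalFrame

end Matrix

namespace NMC

variable {n1 n2 : ℕ}

lemma svalsUnsorted_nonneg (A : Mat n1 n2) : 0 ≤ svalsUnsorted A := fun _ => Real.sqrt_nonneg _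

lemma exists_orthogonal_transpose_mul_self_eq_diagonal (A : Mat n1 n2) :
    ∃ V : Matrix (Fin n2) (Fin n2) ℝ, Vᵀ * V = 1 ∧ V * Vᵀ = 1 ∧
      (A * V)ᵀ * (A * V) = diagonal fun l => svalsUnsorted A l ^ 2 := by
  set hA := isHermitian_conjTranspose_mul_self A
  set V : Matrix (Fin n2) (Fin n2) ℝ := (hA.eigenvectorUnitary : Matrix (Fin n2) (Fin n2) ℝ)
  refine ⟨V, ?_, ?_, ?_⟩
  · have h : star V * V = 1 := Unitary.coe_star_mul_self hA.eigenvectorUnitary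
    rwa [star_eq_conjTranspose, conjTranspose_eq_transpose_of_trivial] at h
  · have h : V * star V = 1 := Unitary.coe_mul_star_self hA.eigenvectorUnitary
    rwa [star_eq_conjTranspose, conjTranspose_eq_transpose_of_trivial] at h
  · have h := hA.conjStarAlgAut_star_eigenvectorUnitary
    rw [Unitary.conjStarAlgAut_star_apply] at h
    have hconj : (A * V)ᵀ * (A * V) = star V * (Aᴴ * A) * V := by
      simp only [star_eq_conjTranspose, conjTranspose_eq_transpose_of_trivial, transpose_mul,
        Matrix.mul_assoc]
    rw [hconj, h]
    congr 1
    funext l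
    exact (Real.sq_sqrt (eigenvalues_conjTranspose_mul_self_nonneg A l)).symm

lemma trace_transpose_mul_le_nuclNorm {G : Mat n1 n2} (hG : G.IsContraction) (A : Mat n1 n2) :
    (Gᵀ * A).trace ≤ nuclNorm A := by
  obtain ⟨V, hV, hV', hAV⟩ := exists_orthogonal_transpose_mul_self_eq_diagonal A
  rw [← trace_transpose_mul_mul_of_mul_transpose G A hV']
  exact (hG.mul_isometry hV).trace_transpose_mul_le_sum (svalsUnsorted_nonneg A) hAV

lemma exists_isContraction_trace_eq_nuclNorm (A : Mat n1 n2) :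
    ∃ G : Mat n1 n2, G.IsContraction ∧ (Gᵀ * A).trace = nuclNorm A := by
  obtain ⟨V, hV, hV', hAV⟩ := exists_orthogonal_transpose_mul_self_eq_diagonal A
  obtain ⟨X, hX, hXA⟩ := exists_isContraction_trace_transpose_mul_eq_sum hAV
  refine ⟨X * Vᵀ, hX.mul_isometry (by rw [transpose_transpose, hV']), ?_⟩
  rw [← trace_transpose_mul_mul_of_mul_transpose _ A hV', Matrix.mul_assoc, hV, Matrix.mul_one,
    hXA]
  rfl

lemma isSymm_and_mul_eq_of_trace_transpose_mul_eq_nuclNorm {G A : Mat n1 n2}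
    (hG : G.IsContraction) (h : (Gᵀ * A).trace = nuclNorm A) :
    (Gᵀ * A).IsSymm ∧ G * (Gᵀ * A) = A := by
  obtain ⟨V, hV, hV', hAV⟩ := exists_orthogonal_transpose_mul_self_eq_diagonal A
  rw [← trace_transpose_mul_mul_of_mul_transpose G A hV'] at h
  obtain ⟨hsymm, hfix⟩ := (hG.mul_isometry hV).isSymm_and_mul_eq_of_trace_transpose_mul_eq_sum
    (svalsUnsorted_nonneg A) hAV h
  have hconj : Gᵀ * A = V * ((G * V)ᵀ * (A * V)) * Vᵀ := by
    rw [transpose_mul]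
    simp only [← Matrix.mul_assoc, hV', Matrix.one_mul]
    rw [Matrix.mul_assoc, hV', Matrix.mul_one]
  refine ⟨?_, ?_⟩
  · rw [hconj, IsSymm, transpose_mul, transpose_mul, transpose_transpose, hsymm.eq]
    exact (Matrix.mul_assoc _ _ _).symm
  · calc G * (Gᵀ * A) = G * V * ((G * V)ᵀ * (A * V)) * Vᵀ := by
          rw [hconj]; simp only [Matrix.mul_assoc]
      _ = A := by rw [hfix, Matrix.mul_assoc, hV', Matrix.mul_one]

lemma nuclNorm_add_le (A B : Mat n1 n2) : nuclNorm (A + B) ≤ nuclNorm A + nuclNorm B := by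
  obtain ⟨G, hG, hGAB⟩ := exists_isContraction_trace_eq_nuclNorm (A + B)
  rw [← hGAB, Matrix.mul_add, trace_add]
  exact add_le_add (trace_transpose_mul_le_nuclNorm hG A) (trace_transpose_mul_le_nuclNorm hG B)

lemma nuclNorm_smul_le {t : ℝ} (ht : 0 ≤ t) (A : Mat n1 n2) :
    nuclNorm (t • A) ≤ t * nuclNorm A := by
  obtain ⟨G, hG, hGA⟩ := exists_isContraction_trace_eq_nuclNorm (t • A)
  rw [← hGA, Matrix.mul_smul, trace_smul, smul_eq_mul]
  exact mul_le_mul_of_nonneg_left (trace_transpose_mul_le_nuclNorm hG A) ht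

lemma convexOn_nuclNorm : ConvexOn ℝ Set.univ (nuclNorm : Mat n1 n2 → ℝ) :=
  ⟨convex_univ, fun A _ B _ _ _ ha hb _ =>
    (nuclNorm_add_le _ _).trans (add_le_add (nuclNorm_smul_le ha A) (nuclNorm_smul_le hb B))⟩

lemma convexOn_nuclNorm_oplus (M : Mat n1 n2) :
    ConvexOn ℝ Set.univ fun c => nuclNorm (oplus M c) := by
  have h : (fun c => nuclNorm (oplus M c)) = nuclNorm ∘ AffineMap.lineMap M (oplus M 1) := by
    ext c
    simp only [Function.comp_apply, AffineMap.lineMap_apply]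
    congr 1
    ext i j
    simp [oplus, add_comm]
  rw [h]
  exact convexOn_nuclNorm.comp_affineMap _

lemma abs_apply_le_nuclNorm (A : Mat n1 n2) (i : Fin n1) (j : Fin n2) : |A i j| ≤ nuclNorm A := by
  have htr : ((single i j (1 : ℝ))ᵀ * A).trace = A i j := by
    rw [transpose_single, trace_single_mul, one_smul]
  have hle := trace_transpose_mul_le_nuclNorm (isContraction_single i j) A
  have hneg := trace_transpose_mul_le_nuclNorm (isContraction_single i j).neg A
  rw [transpose_neg, Matrix.neg_mul, trace_neg, htr] at hneg
  rw [htr] at hle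
  exact abs_le.mpr ⟨by linarith, hle⟩

theorem exists_isMinShift (hn1 : 0 < n1) (hn2 : 0 < n2) (M : Mat n1 n2) :
    ∃ c, IsMinShift M c := by
  let i : Fin n1 := ⟨0, hn1⟩
  let j : Fin n2 := ⟨0, hn2⟩
  have hcont : Continuous fun c => nuclNorm (oplus M c) :=
    continuousOn_univ.mp ((convexOn_nuclNorm_oplus M).continuousOn isOpen_univ)
  have hlow c : ‖c‖ + -|M i j| ≤ nuclNorm (oplus M c) := by
    have h : |M i j + c| ≤ nuclNorm (oplus M c) := abs_apply_le_nuclNorm (oplus M c) i j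
    have h' : |c| ≤ |M i j + c| + |M i j| := by simpa using abs_sub (M i j + c) (M i j)
    rw [Real.norm_eq_abs]
    linarith
  exact hcont.exists_forall_le (Filter.tendsto_atTop_mono hlow
    (Filter.tendsto_atTop_add_const_right _ _ tendsto_norm_cocompact_atTop))

lemma eq_of_trace_transpose_mul_eq_nuclNorm {G A B : Mat n1 n2} (hG : G.IsContraction)
    (hA : (Gᵀ * A).trace = nuclNorm A) (hB : (Gᵀ * B).trace = nuclNorm B)
    (hAB : nuclNorm A = nuclNorm B) {d : ℝ} (hd : ∀ i j, B i j - A i j = d) : A = B := by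
  obtain ⟨hsA, hfA⟩ := isSymm_and_mul_eq_of_trace_transpose_mul_eq_nuclNorm hG hA
  obtain ⟨hsB, hfB⟩ := isSymm_and_mul_eq_of_trace_transpose_mul_eq_nuclNorm hG hB
  have hX : Gᵀ * (B - A) = 0 := by
    refine eq_zero_of_isSymm_of_trace_eq_zero (fun i j k => ?_) ?_ ?_
    · simp [mul_apply, hd]
    · rw [Matrix.mul_sub]
      exact hsB.sub hsA
    · rw [Matrix.mul_sub, trace_sub, hA, hB, hAB, sub_self]
  have hBA : B - A = G * (Gᵀ * (B - A)) := by rw [Matrix.mul_sub, Matrix.mul_sub, hfA, hfB]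
  rw [hX, Matrix.mul_zero, sub_eq_zero] at hBA
  exact hBA.symm

theorem eq_of_isMinShift (hn1 : 0 < n1) (hn2 : 0 < n2) {M : Mat n1 n2} {d₁ d₂ : ℝ}
    (h₁ : IsMinShift M d₁) (h₂ : IsMinShift M d₂) : d₁ = d₂ := by
  have h₁₂ : nuclNorm (oplus M d₁) = nuclNorm (oplus M d₂) := le_antisymm (h₁ d₂) (h₂ d₁)
  have hmid : nuclNorm (oplus M ((d₁ + d₂) / 2)) = nuclNorm (oplus M d₁) := by
    refine le_antisymm ?_ (h₁ _)
    have h := (convexOn_nuclNorm_oplus M).2 (Set.mem_univ d₁) (Set.mem_univ d₂)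
      (by norm_num : (0 : ℝ) ≤ 1 / 2) (by norm_num : (0 : ℝ) ≤ 1 / 2) (by norm_num)
    simp only [smul_eq_mul] at h
    rw [show (d₁ + d₂) / 2 = 1 / 2 * d₁ + 1 / 2 * d₂ by ring]
    linarith
  obtain ⟨G, hG, hGmid⟩ := exists_isContraction_trace_eq_nuclNorm (oplus M ((d₁ + d₂) / 2))
  have hsum : (Gᵀ * oplus M d₁).trace + (Gᵀ * oplus M d₂).trace =
      2 * nuclNorm (oplus M d₁) := by
    have h : oplus M d₁ + oplus M d₂ = (2 : ℝ) • oplus M ((d₁ + d₂) / 2) := by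
      ext i j
      simp only [oplus, Matrix.add_apply, Matrix.smul_apply, smul_eq_mul]
      ring
    rw [← trace_add, ← Matrix.mul_add, h, Matrix.mul_smul, trace_smul, hGmid, hmid, smul_eq_mul]
  have hle₁ := trace_transpose_mul_le_nuclNorm hG (oplus M d₁)
  have hle₂ := trace_transpose_mul_le_nuclNorm hG (oplus M d₂)
  have heq := eq_of_trace_transpose_mul_eq_nuclNorm hG (by linarith) (by linarith) h₁₂
    (d := d₂ - d₁) (fun i j => by simp only [oplus]; ring)
  have h := congrFun (congrFun heq ⟨0, hn1⟩) ⟨0, hn2⟩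
  simp only [oplus, add_right_inj] at h
  exact h

theorem statement12 (n1 n2 : ℕ) (hn1 : 0 < n1) (hn2 : 0 < n2) (M : Mat n1 n2) :
    ConvexOn ℝ Set.univ (fun c : ℝ => nuclNorm (oplus M c)) ∧
    ∃! c : ℝ, IsMinShift M c := by
  obtain ⟨c, hc⟩ := exists_isMinShift hn1 hn2 M
  exact ⟨convexOn_nuclNorm_oplus M, c, hc, fun d hd => eq_of_isMinShift hn1 hn2 hd hc⟩

end NMC
end
end
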